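/- Let J be the T_G^*-ideal generated by x_{1,e}x_{2,e} − x_{2,e}x_{1,e} and x_{1,e} − x_{1,e}^*. If two (G,*)-monomials m_1, m_2 evaluate on generic (G,*)-matrices to matrices having the same nonzero entry in the same position, then m_1 ≡ m_2 mod J. -/

import Mathlib

open Matrix

noncomputable section

/-- The free (G,*)-algebra: the monoid algebra of the free monoid on the variables
x_{k,g} (marker `false`) and x_{k,g}^* (marker `true`), (k,g) ∈ ℕ × G. -/
abbrev FreeGS (F G : Type*) [Field F] := MonoidAlgebra F (FreeMonoid (ℕ × G × Bool))

/-- Degree of a word: x_{k,g} has degree g and x_{k,g}^* has degree g⁻¹. -/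
def wdeg {G : Type*} [Group G] (w : FreeMonoid (ℕ × G × Bool)) : G :=
  ((FreeMonoid.toList w).map (fun v => if v.2.2 then v.2.1⁻¹ else v.2.1)).prod

/-- The involution on words: reverse the word and exchange starred and unstarred
variables. -/
def starW {G : Type*} (w : FreeMonoid (ℕ × G × Bool)) : FreeMonoid (ℕ × G × Bool) :=
  FreeMonoid.ofList (((FreeMonoid.toList w).map (fun v => (v.1, v.2.1, !v.2.2))).reverse)

/-- The involution of the free (G,*)-algebra. -/
def starF (F G : Type*) [Field F] : FreeGS F G →ₗ[F] FreeGS F G :=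
  MonoidAlgebra.mapDomainLinearMap F F starW

/-- The variable x_{k,c} (b = false) or x_{k,c}^* (b = true) as an element of the
free (G,*)-algebra. -/
def xvar (F : Type*) {G : Type*} [Field F] (k : ℕ) (c : G) (b : Bool) : FreeGS F G :=
  MonoidAlgebra.of F (FreeMonoid (ℕ × G × Bool)) (FreeMonoid.of (k, c, b))

/-- The endomorphism of the free (G,*)-algebra induced by a substitution of the
variables. -/
def substHom {F G : Type*} [Field F] (v : ℕ × G × Bool → FreeGS F G) :
    FreeGS F G →ₐ[F] FreeGS F G :=
  MonoidAlgebra.lift F (FreeGS F G) (FreeMonoid (ℕ × G × Bool)) (FreeMonoid.lift v)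

/-- A substitution is admissible when x_{k,g} is sent to a homogeneous element of
degree g and x_{k,g}^* is sent to its star. -/
def Admissible {F G : Type*} [Field F] [Group G] (v : ℕ × G × Bool → FreeGS F G) : Prop :=
  (∀ (k : ℕ) (c : G), ∀ w ∈ (v (k, c, false)).coeff.support, wdeg w = c) ∧
  (∀ (k : ℕ) (c : G), v (k, c, true) = starF F G (v (k, c, false)))

/-- The T_G^*-ideal generated by a set S: the smallest two-sided ideal containing all
admissible substitution instances of elements of S. -/
def TIdealGen {F G : Type*} [Field F] [Group G] (S : Set (FreeGS F G)) : Set (FreeGS F G) :=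
  {x | ∀ I : TwoSidedIdeal (FreeGS F G),
    (∀ f ∈ S, ∀ v, Admissible v → substHom v f ∈ I) → x ∈ I}

/-- The homogeneous component of degree c of the elementary grading of M_n(F). -/
def gradeR (F : Type*) {G : Type*} [Field F] [Group G] {n : ℕ} (g : Fin n → G) (c : G) :
    Submodule F (Matrix (Fin n) (Fin n) F) :=
  Submodule.span F {M : Matrix (Fin n) (Fin n) F | ∃ i j : Fin n,
    (g i)⁻¹ * g j = c ∧ M = Matrix.single i j 1}

/-- Evaluation of the free (G,*)-algebra on a substitution of the variables by matrices:
x_{k,g} goes to a(k,g) and x_{k,g}^* to its transpose. -/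
def evalHom {F G : Type*} [Field F] {n : ℕ} (a : ℕ × G → Matrix (Fin n) (Fin n) F) :
    FreeGS F G →ₐ[F] Matrix (Fin n) (Fin n) F :=
  MonoidAlgebra.lift F (Matrix (Fin n) (Fin n) F) (FreeMonoid (ℕ × G × Bool))
    (FreeMonoid.lift (fun v => if v.2.2 then (a (v.1, v.2.1))ᵀ else a (v.1, v.2.1)))

/-- f is a (G,*)-identity of M_n(F) with the elementary grading induced by g and the
transpose involution. -/
def IsGSId {F G : Type*} [Field F] [Group G] {n : ℕ} (g : Fin n → G) (f : FreeGS F G) :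
    Prop :=
  ∀ a : ℕ × G → Matrix (Fin n) (Fin n) F,
    (∀ k c, a (k, c) ∈ gradeR F g c) → evalHom a f = 0

open scoped Classical

/-!
Reading a word from row `p`, each generic (G,*)-matrix has at most one nonzero entry in the
current row, since `g` is injective; so a nonzero entry of a product along a word is the
monomial of the indeterminates met along a walk on `Fin n`, and two monomials with the same
nonzero entry give two walks with the same ends and the same multiset of edges.

Modulo `J`, a subword of degree `e` may be replaced by its star (substitute it for `x_{1,e}` in
`x_{1,e} - x_{1,e}^*`), and a subword read along a closed walk has degree `e`. By induction on
the second word it suffices to bring its first letter `f`, leaving `p`, to the front of the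
first word by such stars. Locate the same edge in the first word. If it is read into `p`,
star the closed walk it ends. If it is read out of `p` after a nonempty closed walk `P`, the
rest of the first walk meets `P`: the second walk starts outside the vertices of `P` and must
still use the edges of `P`. Starring the closed walk through the meeting point reduces to the
first case.
-/

namespace GStarWord

open Relation

abbrev Letter (G : Type*) := ℕ × G × Bool

namespace Letter

variable {G : Type*} {n : ℕ}

def star (ℓ : Letter G) : Letter G := (ℓ.1, ℓ.2.1, !ℓ.2.2)

/-- The indeterminate of the generic matrix of `ℓ` in the entry met when `ℓ` is read
from `p` to `y`. -/
def edge (ℓ : Letter G) (p y : Fin n) : ℕ × Fin n × Fin n :=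
  if ℓ.2.2 then (ℓ.1, y, p) else (ℓ.1, p, y)

@[simp] lemma star_star (ℓ : Letter G) : ℓ.star.star = ℓ := by
  simp [star]

@[simp] lemma edge_star (ℓ : Letter G) (p y : Fin n) : ℓ.star.edge y p = ℓ.edge p y := by
  obtain ⟨m, c, _ | _⟩ := ℓ <;> rfl

lemma edge_ends (ℓ : Letter G) (p y : Fin n) :
    (ℓ.edge p y).2.1 = p ∧ (ℓ.edge p y).2.2 = y ∨
      (ℓ.edge p y).2.1 = y ∧ (ℓ.edge p y).2.2 = p := by
  obtain ⟨m, c, _ | _⟩ := ℓ <;> simp [edge]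

lemma eq_or_eq_of_edge_eq {ℓ f : Letter G} {x y p w : Fin n} (h : ℓ.edge x y = f.edge p w) :
    x = p ∨ y = p := by
  obtain ⟨m, c, _ | _⟩ := ℓ <;> obtain ⟨m', c', _ | _⟩ := f <;> simp_all [edge]

variable [Group G]

def deg (ℓ : Letter G) : G := if ℓ.2.2 then ℓ.2.1⁻¹ else ℓ.2.1

@[simp] lemma deg_star (ℓ : Letter G) : ℓ.star.deg = ℓ.deg⁻¹ := by
  obtain ⟨m, c, _ | _⟩ := ℓ <;> simp [star, deg]

lemma mul_deg_star {a b : G} {ℓ : Letter G} (h : a * ℓ.deg = b) : b * ℓ.star.deg = a := by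
  rw [deg_star, ← h, mul_inv_cancel_right]

lemma eq_or_star_eq_of_edge_eq {g : Fin n → G} {ℓ f : Letter G} {p y w : Fin n}
    (hℓ : g p * ℓ.deg = g y) (hf : g p * f.deg = g w) (h : ℓ.edge p y = f.edge p w) :
    y = w ∧ (ℓ = f ∨ ℓ.deg = 1 ∧ ℓ.star = f) := by
  obtain ⟨m, c, _ | _⟩ := ℓ <;> obtain ⟨m', c', _ | _⟩ := f <;>
    simp only [edge, deg, star, Prod.mk.injEq] at h hℓ hf ⊢ <;>
    obtain ⟨rfl, h₁, h₂⟩ := h <;> simp_all <;>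
    simpa using hℓ.trans hf.symm

end Letter

section Words

variable {G : Type*}

def starWord (L : List (Letter G)) : List (Letter G) := (L.map Letter.star).reverse

@[simp] lemma starWord_nil : starWord ([] : List (Letter G)) = [] := rfl

@[simp] lemma starWord_append (A B : List (Letter G)) :
    starWord (A ++ B) = starWord B ++ starWord A := by
  simp [starWord]

@[simp] lemma starWord_cons (ℓ : Letter G) (L : List (Letter G)) :
    starWord (ℓ :: L) = starWord L ++ [ℓ.star] := by
  simp [starWord]

variable [Group G]

def wordDeg (L : List (Letter G)) : G := (L.map Letter.deg).prod

@[simp] lemma wordDeg_nil : wordDeg ([] : List (Letter G)) = 1 := rfl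

@[simp] lemma wordDeg_cons (ℓ : Letter G) (L : List (Letter G)) :
    wordDeg (ℓ :: L) = ℓ.deg * wordDeg L := by
  simp [wordDeg]

end Words

section Walks

variable {G : Type*} [Group G] {n : ℕ} {g : Fin n → G}

/-- Reading the word `L` from the vertex `p`: a letter `ℓ` leads from `p` to the `y` with
`g p * ℓ.deg = g y`, the only column in which row `p` of its generic matrix is nonzero;
`E` collects the indeterminates met on the way. -/
inductive Walk (g : Fin n → G) :
    Fin n → List (Letter G) → Fin n → Multiset (ℕ × Fin n × Fin n) → Prop
  | nil (p : Fin n) : Walk g p [] p 0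
  | cons {p y q : Fin n} {ℓ : Letter G} {L : List (Letter G)}
      {E : Multiset (ℕ × Fin n × Fin n)} :
      g p * ℓ.deg = g y → Walk g y L q E → Walk g p (ℓ :: L) q (ℓ.edge p y ::ₘ E)

namespace Walk

variable {p q x y : Fin n} {L A B : List (Letter G)}
  {E E₁ E₂ : Multiset (ℕ × Fin n × Fin n)}

lemma of_cons {ℓ : Letter G} (h : Walk g p (ℓ :: L) q E) :
    ∃ y E', g p * ℓ.deg = g y ∧ Walk g y L q E' ∧ E = ℓ.edge p y ::ₘ E' := by
  cases h with
  | cons hℓ hL => exact ⟨_, _, hℓ, hL, rfl⟩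

lemma append (h₁ : Walk g p A x E₁) (h₂ : Walk g x B q E₂) :
    Walk g p (A ++ B) q (E₁ + E₂) := by
  induction h₁ with
  | nil => simpa using h₂
  | cons hℓ _ ih => simpa using cons hℓ (ih h₂)

lemma of_append (h : Walk g p (A ++ B) q E) :
    ∃ x E₁ E₂, Walk g p A x E₁ ∧ Walk g x B q E₂ ∧ E = E₁ + E₂ := by
  induction A generalizing p E with
  | nil => exact ⟨p, 0, E, nil p, h, by simp⟩
  | cons ℓ A ih =>
    obtain ⟨y, E', hℓ, hL, rfl⟩ := h.of_cons
    obtain ⟨x, E₁, E₂, h₁, h₂, rfl⟩ := ih hL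
    exact ⟨x, _, E₂, cons hℓ h₁, h₂, by simp⟩

lemma starWord (h : Walk g p L q E) : Walk g q (starWord L) p E := by
  induction h with
  | nil p => exact nil p
  | @cons p y q ℓ L E hℓ _ ih =>
    simpa [add_comm E] using ih.append (cons (Letter.mul_deg_star hℓ) (nil p))

lemma mul_wordDeg (h : Walk g p L q E) : g p * wordDeg L = g q := by
  induction h with
  | nil => simp
  | cons hℓ _ ih => rw [wordDeg_cons, ← mul_assoc, hℓ, ih]

lemma wordDeg_eq_one (h : Walk g p L p E) : wordDeg L = 1 :=
  mul_eq_left.mp h.mul_wordDeg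

lemma unique (hg : Function.Injective g) (h₁ : Walk g p L q E₁) (h₂ : Walk g p L x E₂) :
    q = x ∧ E₁ = E₂ := by
  induction h₁ generalizing E₂ with
  | nil => cases h₂; exact ⟨rfl, rfl⟩
  | cons hℓ _ ih =>
    obtain ⟨y', E', hℓ', hL', rfl⟩ := h₂.of_cons
    obtain rfl := hg (hℓ.symm.trans hℓ')
    obtain ⟨rfl, rfl⟩ := ih hL'
    exact ⟨rfl, rfl⟩

lemma eq_nil_of_edges_eq_zero (h : Walk g p L q 0) : L = [] := by
  cases L with
  | nil => rfl
  | cons =>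
    obtain ⟨_, _, _, _, hE⟩ := h.of_cons
    exact absurd hE.symm Multiset.cons_ne_zero

lemma edges_ne_zero (h : Walk g p L q E) (hL : L ≠ []) : E ≠ 0 := by
  cases h with
  | nil => exact absurd rfl hL
  | cons => exact Multiset.cons_ne_zero

lemma exists_split_of_mem (h : Walk g p L q E) {e : ℕ × Fin n × Fin n} (he : e ∈ E) :
    ∃ P ℓ S x y E₁ E₂, L = P ++ ℓ :: S ∧ Walk g p P x E₁ ∧ g x * ℓ.deg = g y ∧
      ℓ.edge x y = e ∧ Walk g y S q E₂ ∧ E = E₁ + (e ::ₘ E₂) := by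
  induction h with
  | nil => simp at he
  | @cons p y q ℓ L E hℓ hL ih =>
    rcases Multiset.mem_cons.mp he with rfl | he
    · exact ⟨[], ℓ, L, p, y, 0, E, rfl, nil p, hℓ, rfl, hL, by simp⟩
    · obtain ⟨P, ℓ', S, x, y', E₁, E₂, rfl, hP, hℓ', rfl, hS, rfl⟩ := ih he
      exact ⟨ℓ :: P, ℓ', S, x, y', _, E₂, rfl, cons hℓ hP, hℓ', rfl, hS,
        by rw [Multiset.cons_add]⟩

lemma fst_not_mem (h : Walk g p L q E) {A : Set (Fin n)} (hp : p ∉ A)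
    (hE : ∀ e ∈ E, e.2.1 ∈ A ↔ e.2.2 ∈ A) : ∀ e ∈ E, e.2.1 ∉ A := by
  induction h with
  | nil => simp
  | @cons p y q ℓ L E hℓ hL ih =>
    have hpy := hE _ (Multiset.mem_cons_self _ _)
    have hy : y ∉ A := by
      rcases ℓ.edge_ends p y with ⟨h₁, h₂⟩ | ⟨h₁, h₂⟩ <;> rw [h₁, h₂] at hpy <;>
        tauto
    intro e he
    rcases Multiset.mem_cons.mp he with rfl | he
    · rcases ℓ.edge_ends p y with ⟨h₁, -⟩ | ⟨h₁, -⟩ <;> rw [h₁] <;> assumption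
    · exact ih hy (fun e he => hE e (Multiset.mem_cons_of_mem he)) e he

end Walk

def Visits (g : Fin n → G) (p : Fin n) (L : List (Letter G)) (z : Fin n) : Prop :=
  ∃ L₁ L₂ E, L = L₁ ++ L₂ ∧ Walk g p L₁ z E

namespace Walk

variable {p q z : Fin n} {L : List (Letter G)} {E : Multiset (ℕ × Fin n × Fin n)}

lemma visits_start (L : List (Letter G)) (p : Fin n) : Visits g p L p :=
  ⟨[], L, 0, rfl, nil p⟩

lemma visits_cons {ℓ : Letter G} {y : Fin n} (hℓ : g p * ℓ.deg = g y) (h : Visits g y L z) :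
    Visits g p (ℓ :: L) z := by
  obtain ⟨L₁, L₂, E, rfl, hL₁⟩ := h
  exact ⟨ℓ :: L₁, L₂, _, rfl, cons hℓ hL₁⟩

lemma visits_of_mem (h : Walk g p L q E) :
    ∀ e ∈ E, Visits g p L e.2.1 ∧ Visits g p L e.2.2 := by
  induction h with
  | nil => simp
  | @cons p y q ℓ L E hℓ hL ih =>
    intro e he
    rcases Multiset.mem_cons.mp he with rfl | he
    · have hp := visits_start (g := g) (ℓ :: L) p
      have hy := visits_cons hℓ (visits_start L y)
      rcases ℓ.edge_ends p y with ⟨h₁, h₂⟩ | ⟨h₁, h₂⟩ <;> rw [h₁, h₂] <;>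
        exact ⟨‹_›, ‹_›⟩
    · exact (ih e he).imp (visits_cons hℓ) (visits_cons hℓ)

lemma exists_split_of_visits (hg : Function.Injective g) (h : Walk g p L q E)
    (hz : Visits g p L z) :
    ∃ L₁ L₂ E₁ E₂, L = L₁ ++ L₂ ∧ Walk g p L₁ z E₁ ∧ Walk g z L₂ q E₂ := by
  obtain ⟨L₁, L₂, E₁, rfl, hL₁⟩ := hz
  obtain ⟨x, E₁', E₂, h₁, h₂, -⟩ := h.of_append
  obtain ⟨rfl, -⟩ := h₁.unique hg hL₁
  exact ⟨L₁, L₂, E₁', E₂, rfl, h₁, h₂⟩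

end Walk

variable {p q q' y : Fin n} {P S L : List (Letter G)} {E₁ E₂ : Multiset (ℕ × Fin n × Fin n)}

/-- If the two walks were disjoint, `hL`, which starts outside the vertices of `P`, could never
use the edges of `P`. -/
lemma exists_common_vertex (hP : Walk g p P p E₁) (hPne : P ≠ []) (hS : Walk g y S q E₂)
    (hL : Walk g y L q' (E₁ + E₂)) : ∃ z, Visits g p P z ∧ Visits g y S z := by
  by_contra! hdisj
  set A := {z | Visits g p P z}
  have hE : ∀ e ∈ E₁ + E₂, e.2.1 ∈ A ↔ e.2.2 ∈ A := by
    intro e he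
    rcases Multiset.mem_add.mp he with he | he
    · exact iff_of_true (hP.visits_of_mem e he).1 (hP.visits_of_mem e he).2
    · exact iff_of_false (fun h => hdisj _ h (hS.visits_of_mem e he).1)
        (fun h => hdisj _ h (hS.visits_of_mem e he).2)
  obtain ⟨e, he⟩ := Multiset.exists_mem_of_ne_zero (hP.edges_ne_zero hPne)
  exact hL.fst_not_mem (fun h => hdisj _ h (Walk.visits_start S y)) hE e
    (Multiset.mem_add.mpr (.inl he)) (hP.visits_of_mem e he).1

end Walks

section Moves

variable {G : Type*} [Group G] {n : ℕ} {g : Fin n → G}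

inductive StarMove : List (Letter G) → List (Letter G) → Prop
  | star (A U B : List (Letter G)) :
      wordDeg U = 1 → StarMove (A ++ U ++ B) (A ++ starWord U ++ B)

namespace StarMove

variable {L L' : List (Letter G)}

lemma of_walk {z : Fin n} {U : List (Letter G)} {E : Multiset (ℕ × Fin n × Fin n)}
    (hU : Walk g z U z E) (A B : List (Letter G)) :
    StarMove (A ++ U ++ B) (A ++ starWord U ++ B) :=
  star A U B hU.wordDeg_eq_one

lemma cons (ℓ : Letter G) : StarMove L L' → StarMove (ℓ :: L) (ℓ :: L')
  | star A U B hU => star (ℓ :: A) U B hU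

lemma walk (hg : Function.Injective g) {p q : Fin n} {E : Multiset (ℕ × Fin n × Fin n)} :
    StarMove L L' → Walk g p L q E → Walk g p L' q E
  | star A U B hU, h => by
    obtain ⟨y, E₁₂, E₃, h₁₂, h₃, rfl⟩ := h.of_append
    obtain ⟨x, E₁, E₂, h₁, h₂, rfl⟩ := h₁₂.of_append
    obtain rfl : x = y := hg (by simpa [hU] using h₂.mul_wordDeg)
    exact (h₁.append h₂.starWord).append h₃

end StarMove

lemma Walk.of_reflTransGen_starMove (hg : Function.Injective g) {L L' : List (Letter G)}
    {p q : Fin n} {E : Multiset (ℕ × Fin n × Fin n)} (hLL' : ReflTransGen StarMove L L')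
    (h : Walk g p L q E) : Walk g p L' q E := by
  induction hLL' with
  | refl => exact h
  | tail _ hm ih => exact hm.walk hg ih

/-- A closed walk ending with `ℓ` is starred as a whole, bringing `ℓ.star` to the front. -/
lemma reflTransGen_starMove_of_enters {p x : Fin n} {P : List (Letter G)}
    {E : Multiset (ℕ × Fin n × Fin n)} (hP : Walk g p P x E) {ℓ : Letter G}
    (hℓ : g x * ℓ.deg = g p) (S : List (Letter G)) :
    ReflTransGen StarMove (P ++ ℓ :: S) (ℓ.star :: (starWord P ++ S)) := by
  simpa using ReflTransGen.single (StarMove.of_walk (hP.append (.cons hℓ (.nil p))) [] S)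

/-- A letter leaving a nonempty closed walk at `p` is brought to the front by two stars: one of
the closed walk through `ℓ` based at a vertex `z` where the two walks meet, after which `ℓ.star`
closes a walk at `p`. -/
lemma exists_reflTransGen_starMove_of_leaves (hg : Function.Injective g) {p y q q' : Fin n}
    {P S L : List (Letter G)} {E₁ E₂ : Multiset (ℕ × Fin n × Fin n)} (hP : Walk g p P p E₁)
    (hPne : P ≠ []) {ℓ : Letter G} (hℓ : g p * ℓ.deg = g y) (hS : Walk g y S q E₂)
    (hL : Walk g y L q' (E₁ + E₂)) :
    ∃ T, ReflTransGen StarMove (P ++ ℓ :: S) (ℓ :: T) := by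
  obtain ⟨z, hzP, hzS⟩ := exists_common_vertex hP hPne hS hL
  obtain ⟨C₁, C₂, _, _, rfl, hC₁, hC₂⟩ := hP.exists_split_of_visits hg hzP
  obtain ⟨S₁, S₂, _, _, rfl, hS₁, -⟩ := hS.exists_split_of_visits hg hzS
  have hstar : StarMove (C₁ ++ C₂ ++ ℓ :: (S₁ ++ S₂))
      ((C₁ ++ starWord S₁) ++ ℓ.star :: (starWord C₂ ++ S₂)) := by
    simpa using StarMove.of_walk (hC₂.append (.cons hℓ hS₁)) C₁ S₂
  have hfront := reflTransGen_starMove_of_enters (hC₁.append hS₁.starWord)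
    (Letter.mul_deg_star hℓ) (starWord C₂ ++ S₂)
  rw [Letter.star_star] at hfront
  exact ⟨_, .head hstar hfront⟩

lemma exists_reflTransGen_starMove_cons (hg : Function.Injective g) {p q w : Fin n}
    {L L₂ : List (Letter G)} {E : Multiset (ℕ × Fin n × Fin n)} {f : Letter G}
    (h : Walk g p L q (f.edge p w ::ₘ E)) (hf : g p * f.deg = g w) (h₂ : Walk g w L₂ q E) :
    ∃ T, ReflTransGen StarMove L (f :: T) := by
  obtain ⟨P, ℓ, S, x, y, E₁, E₂, rfl, hP, hℓ, hedge, hS, hE⟩ :=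
    h.exists_split_of_mem (Multiset.mem_cons_self _ _)
  suffices ∃ ℓ' y' T, g p * ℓ'.deg = g y' ∧ ℓ'.edge p y' = f.edge p w ∧
      ReflTransGen StarMove (P ++ ℓ :: S) (ℓ' :: T) by
    obtain ⟨ℓ', y', T, hℓ', hedge', hmoves⟩ := this
    obtain ⟨-, rfl | ⟨hdeg, rfl⟩⟩ := Letter.eq_or_star_eq_of_edge_eq hℓ' hf hedge'
    · exact ⟨T, hmoves⟩
    · exact ⟨T, hmoves.tail (by simpa [hdeg] using StarMove.star [] [ℓ'] T)⟩
  rcases ℓ.eq_or_eq_of_edge_eq hedge with rfl | rfl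
  · rcases eq_or_ne P [] with rfl | hPne
    · exact ⟨ℓ, y, S, hℓ, hedge, .refl⟩
    · obtain ⟨rfl, -⟩ := Letter.eq_or_star_eq_of_edge_eq hℓ hf hedge
      rw [Multiset.add_cons, Multiset.cons_inj_right] at hE
      obtain ⟨T, hT⟩ := exists_reflTransGen_starMove_of_leaves hg hP hPne hℓ hS (hE ▸ h₂)
      exact ⟨ℓ, y, T, hℓ, hedge, hT⟩
  · exact ⟨ℓ.star, x, _, Letter.mul_deg_star hℓ, by simpa using hedge,
      reflTransGen_starMove_of_enters hP hℓ S⟩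

theorem Walk.reflTransGen_starMove (hg : Function.Injective g) {p q : Fin n}
    {L₁ L₂ : List (Letter G)} {E : Multiset (ℕ × Fin n × Fin n)} (h₁ : Walk g p L₁ q E)
    (h₂ : Walk g p L₂ q E) : ReflTransGen StarMove L₁ L₂ := by
  induction L₂ generalizing L₁ p E with
  | nil =>
    cases h₂
    rw [h₁.eq_nil_of_edges_eq_zero]
  | cons f L₂ ih =>
    obtain ⟨w, E', hf, hL₂, rfl⟩ := h₂.of_cons
    obtain ⟨T, hT⟩ := exists_reflTransGen_starMove_cons hg h₁ hf hL₂
    obtain ⟨w', E'', hf', hT', hE⟩ := (Walk.of_reflTransGen_starMove hg hT h₁).of_cons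
    obtain rfl := hg (hf'.symm.trans hf)
    rw [Multiset.cons_inj_right] at hE
    subst hE
    exact hT.trans (ReflTransGen.lift (f :: ·) (fun _ _ => StarMove.cons f) _ _ (ih hT' hL₂))

end Moves

section GenericMatrices

variable {F : Type*} [Field F] {G : Type*} [Group G] {n : ℕ}

def IsGenericFamily (g : Fin n → G)
    (A : ℕ → G → Bool → Matrix (Fin n) (Fin n) (MvPolynomial (ℕ × Fin n × Fin n) F)) :
    Prop :=
  ∀ (m : ℕ) (c : G) (p q : Fin n),
    (A m c false p q = if g p * c = g q then MvPolynomial.X (m, p, q) else 0) ∧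
    A m c true = (A m c false)ᵀ

def wordMatrix
    (A : ℕ → G → Bool → Matrix (Fin n) (Fin n) (MvPolynomial (ℕ × Fin n × Fin n) F))
    (L : List (Letter G)) : Matrix (Fin n) (Fin n) (MvPolynomial (ℕ × Fin n × Fin n) F) :=
  (L.map fun ℓ => A ℓ.1 ℓ.2.1 ℓ.2.2).prod

variable {g : Fin n → G}
  {A : ℕ → G → Bool → Matrix (Fin n) (Fin n) (MvPolynomial (ℕ × Fin n × Fin n) F)}

namespace IsGenericFamily

lemma apply (hA : IsGenericFamily g A) (ℓ : Letter G) (p s : Fin n) :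
    A ℓ.1 ℓ.2.1 ℓ.2.2 p s =
      if g p * ℓ.deg = g s then MvPolynomial.X (ℓ.edge p s) else 0 := by
  obtain ⟨m, c, _ | _⟩ := ℓ
  · exact (hA m c p s).1
  · rw [(hA m c p s).2, transpose_apply, (hA m c s p).1]
    simp only [Letter.deg, Letter.edge, if_true, mul_inv_eq_iff_eq_mul, eq_comm (a := g p)]

lemma wordMatrix_apply (hA : IsGenericFamily g A) (hg : Function.Injective g)
    (L : List (Letter G)) (p q : Fin n) :
    wordMatrix A L p q = 0 ∨ ∃ E, Walk g p L q E ∧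
      wordMatrix A L p q = MvPolynomial.monomial (Multiset.toFinsupp E) 1 := by
  induction L generalizing p with
  | nil =>
    by_cases hpq : p = q
    · subst hpq
      exact .inr ⟨0, .nil p, by simp [wordMatrix]⟩
    · exact .inl (by simp [wordMatrix, one_apply, hpq])
  | cons ℓ L ih =>
    have hcons : wordMatrix A (ℓ :: L) p q =
        ∑ s, A ℓ.1 ℓ.2.1 ℓ.2.2 p s * wordMatrix A L s q := by
      simp [wordMatrix, mul_apply]
    by_cases hstep : ∃ y, g p * ℓ.deg = g y
    · obtain ⟨y, hy⟩ := hstep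
      have hsum : wordMatrix A (ℓ :: L) p q =
          MvPolynomial.X (ℓ.edge p y) * wordMatrix A L y q := by
        rw [hcons, Finset.sum_eq_single y]
        · simp [hA.apply, hy]
        · intro s _ hsy
          simp [hA.apply, hy, hg.ne_iff.mpr hsy.symm]
        · simp
      rcases ih y with h | ⟨E, hE, h⟩
      · exact .inl (by rw [hsum, h, mul_zero])
      · refine .inr ⟨_, .cons hy hE, ?_⟩
        rw [hsum, h, ← Multiset.singleton_add, Multiset.toFinsupp_add,
          Multiset.toFinsupp_singleton, MvPolynomial.monomial_single_add, pow_one]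
    · push Not at hstep
      exact .inl (by simp [hcons, hA.apply, hstep])

end IsGenericFamily

end GenericMatrices

section Ideal

variable {F : Type*} [Field F] {G : Type*}

variable (F) in
def word (L : List (Letter G)) : FreeGS F G :=
  MonoidAlgebra.of F _ (FreeMonoid.ofList L)

lemma word_append (A B : List (Letter G)) : word F (A ++ B) = word F A * word F B := by
  simp [word]

lemma starF_word (L : List (Letter G)) : starF F G (word F L) = word F (starWord L) :=
  MonoidAlgebra.mapDomainLinearMap_single ..

lemma coeff_support_word (L : List (Letter G)) :
    (word F L).coeff.support = {FreeMonoid.ofList L} := by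
  rw [word, MonoidAlgebra.of_apply, MonoidAlgebra.coeff_single]
  exact Finsupp.support_single _ one_ne_zero

lemma substHom_xvar (v : Letter G → FreeGS F G) (k : ℕ) (c : G) (b : Bool) :
    substHom v (xvar F k c b) = v (k, c, b) := by
  rw [substHom, xvar, MonoidAlgebra.lift_of]
  rfl

variable [Group G]

lemma wdeg_ofList (L : List (Letter G)) : wdeg (FreeMonoid.ofList L) = wordDeg L := rfl

def substAt (k : ℕ) (c : G) (u : FreeGS F G) : Letter G → FreeGS F G :=
  fun ℓ => if ℓ.1 = k ∧ ℓ.2.1 = c then (if ℓ.2.2 then starF F G u else u) else 0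

lemma admissible_substAt {k : ℕ} {c : G} {u : FreeGS F G}
    (hu : ∀ w ∈ u.coeff.support, wdeg w = c) : Admissible (substAt k c u) := by
  refine ⟨fun k' c' w hw => ?_, fun k' c' => ?_⟩
  · by_cases h : k' = k ∧ c' = c
    · obtain ⟨rfl, rfl⟩ := h
      simp only [substAt, and_self, if_true, Bool.false_eq_true, if_false] at hw
      exact hu w hw
    · simp [substAt, h] at hw
  · by_cases h : k' = k ∧ c' = c <;> simp [substAt, h]

lemma sub_starF_mem {I : TwoSidedIdeal (FreeGS F G)} {k : ℕ} {c : G}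
    (hI : ∀ v, Admissible v → substHom v (xvar F k c false - xvar F k c true) ∈ I)
    {u : FreeGS F G} (hu : ∀ w ∈ u.coeff.support, wdeg w = c) : u - starF F G u ∈ I := by
  simpa [substHom_xvar, substAt] using hI _ (admissible_substAt (k := k) hu)

lemma StarMove.word_sub_word_mem {I : TwoSidedIdeal (FreeGS F G)}
    (hI : ∀ v, Admissible v → substHom v (xvar F 1 1 false - xvar F 1 1 true) ∈ I)
    {L L' : List (Letter G)} : StarMove L L' → word F L - word F L' ∈ I
  | star A U B hU => by
    have hstar := sub_starF_mem hI (u := word F U)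
      (by simpa [coeff_support_word, wdeg_ofList] using hU)
    rw [word_append, word_append, word_append, word_append, ← starF_word, ← sub_mul,
      ← mul_sub]
    exact I.mul_mem_right _ _ (I.mul_mem_left _ _ hstar)

lemma word_sub_word_mem_of_reflTransGen {I : TwoSidedIdeal (FreeGS F G)}
    (hI : ∀ v, Admissible v → substHom v (xvar F 1 1 false - xvar F 1 1 true) ∈ I)
    {L L' : List (Letter G)} (h : ReflTransGen StarMove L L') : word F L - word F L' ∈ I := by
  induction h with
  | refl => simp
  | tail _ hm ih => simpa using I.add_mem ih (hm.word_sub_word_mem hI)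

end Ideal

end GStarWord

theorem stmt_18_general (F : Type*) [Field F] (G : Type*) [Group G] (n : ℕ)
    (g : Fin n → G) (hinj : Function.Injective g)
    (A : ℕ → G → Bool → Matrix (Fin n) (Fin n) (MvPolynomial (ℕ × Fin n × Fin n) F))
    (hA : ∀ (m : ℕ) (c : G) (p q : Fin n),
      (A m c false p q = if g p * c = g q then MvPolynomial.X (m, p, q) else 0) ∧
      A m c true = (A m c false)ᵀ)
    (r l : ℕ) (i : Fin r → ℕ) (h : Fin r → G) (ε : Fin r → Bool)
    (j : Fin l → ℕ) (h' : Fin l → G) (η : Fin l → Bool)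
    (p q : Fin n)
    (hsame : (List.ofFn fun k : Fin r => A (i k) (h k) (ε k)).prod p q =
             (List.ofFn fun k : Fin l => A (j k) (h' k) (η k)).prod p q)
    (hnz : (List.ofFn fun k : Fin r => A (i k) (h k) (ε k)).prod p q ≠ 0) :
    (MonoidAlgebra.of F (FreeMonoid (ℕ × G × Bool))
        (FreeMonoid.ofList (List.ofFn fun k : Fin r => (i k, h k, ε k))) : FreeGS F G) -
      MonoidAlgebra.of F (FreeMonoid (ℕ × G × Bool))
        (FreeMonoid.ofList (List.ofFn fun k : Fin l => (j k, h' k, η k)))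
      ∈ TIdealGen
          {xvar F 1 (1 : G) false * xvar F 2 (1 : G) false -
             xvar F 2 (1 : G) false * xvar F 1 (1 : G) false,
           xvar F 1 (1 : G) false - xvar F 1 (1 : G) true} := by
  have hA : GStarWord.IsGenericFamily g A := hA
  have hmatrix : ∀ {k : ℕ} (a : Fin k → ℕ) (b : Fin k → G) (e : Fin k → Bool),
      (List.ofFn fun t => A (a t) (b t) (e t)).prod =
        GStarWord.wordMatrix A (List.ofFn fun t => (a t, b t, e t)) := by
    intro k a b e
    simp [GStarWord.wordMatrix, List.map_ofFn, Function.comp_def]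
  rw [hmatrix, hmatrix] at hsame
  rw [hmatrix] at hnz
  obtain ⟨E₁, h₁, he₁⟩ := (hA.wordMatrix_apply hinj _ p q).resolve_left hnz
  obtain ⟨E₂, h₂, he₂⟩ := (hA.wordMatrix_apply hinj _ p q).resolve_left (hsame ▸ hnz)
  obtain rfl : E₁ = E₂ := Multiset.toFinsupp.injective
    (MvPolynomial.monomial_left_injective one_ne_zero (he₁.symm.trans (hsame.trans he₂)))
  intro I hI
  exact GStarWord.word_sub_word_mem_of_reflTransGen (hI _ (Set.mem_insert_of_mem _ rfl))
    (h₁.reflTransGen_starMove hinj h₂)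

/-- Let J be the T_G^*-ideal generated by x_{1,e}x_{2,e} − x_{2,e}x_{1,e}
and x_{1,e} − x_{1,e}^*. If two (G,*)-monomials m₁ = x_{i_1,h_1}^{ε_1}⋯x_{i_r,h_r}^{ε_r}
and m₂ = x_{j_1,h'_1}^{η_1}⋯x_{j_l,h'_l}^{η_l} evaluate on generic (G,*)-matrices to
matrices having the same nonzero entry in the same position, then m₁ ≡ m₂ mod J. -/
theorem stmt_18 (F : Type*) [Field F] [Infinite F] (G : Type*) [Group G] (n : ℕ)
    (g : Fin n → G) (hinj : Function.Injective g)
    (A : ℕ → G → Bool → Matrix (Fin n) (Fin n) (MvPolynomial (ℕ × Fin n × Fin n) F))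
    (hA : ∀ (m : ℕ) (c : G) (p q : Fin n),
      (A m c false p q = if g p * c = g q then MvPolynomial.X (m, p, q) else 0) ∧
      A m c true = (A m c false)ᵀ)
    (r l : ℕ) (i : Fin r → ℕ) (h : Fin r → G) (ε : Fin r → Bool)
    (j : Fin l → ℕ) (h' : Fin l → G) (η : Fin l → Bool)
    (p q : Fin n)
    (hsame : (List.ofFn fun k : Fin r => A (i k) (h k) (ε k)).prod p q =
             (List.ofFn fun k : Fin l => A (j k) (h' k) (η k)).prod p q)
    (hnz : (List.ofFn fun k : Fin r => A (i k) (h k) (ε k)).prod p q ≠ 0) :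
    (MonoidAlgebra.of F (FreeMonoid (ℕ × G × Bool))
        (FreeMonoid.ofList (List.ofFn fun k : Fin r => (i k, h k, ε k))) : FreeGS F G) -
      MonoidAlgebra.of F (FreeMonoid (ℕ × G × Bool))
        (FreeMonoid.ofList (List.ofFn fun k : Fin l => (j k, h' k, η k)))
      ∈ TIdealGen
          {xvar F 1 (1 : G) false * xvar F 2 (1 : G) false -
             xvar F 2 (1 : G) false * xvar F 1 (1 : G) false,
           xvar F 1 (1 : G) false - xvar F 1 (1 : G) true} :=
  stmt_18_general F G n g hinj A hA r l i h ε j h' η p q hsame hnz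
end
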